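/- There exists a tripartite box P with binary inputs x,y,z ∈ {0,1} and binary outputs a,b,c ∈ {0,1} satisfying the relativistic causality constraints, such that: (i) P(a,b,c|x,y,z) > 0 implies b = 0 and a ⊕ c = x·y·z (so the three-party Mermin relation a ⊕ b ⊕ c = x·y·z holds with probability 1 for every input triple); and (ii) the single-party marginals of A and C are uniform: Σ_{b,c} P(a,b,c|x,y,z) = 1/2 and Σ_{a,b} P(a,b,c|x,y,z) = 1/2 for all inputs and all a, c. -/
import Mathlib


open Finset

/-- There exists a relativistically causal tripartite box with binary inputs/outputs
which deterministically outputs `b = 0`, satisfies the Mermin relation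
`a ⊕ c = x·y·z` with probability one for every input triple, and has uniform
single-party marginals for `A` and `C`. -/
theorem exists_relativistically_causal_mermin_box :
    ∃ P : Bool → Bool → Bool → Bool → Bool → Bool → ℝ,
      -- P x y z a b c; tripartite box
      (∀ x y z a b c, 0 ≤ P x y z a b c) ∧
      (∀ x y z, ∑ a, ∑ b, ∑ c, P x y z a b c = 1) ∧
      -- relativistic causality constraints
      (∀ b c y z x x', ∑ a, P x y z a b c = ∑ a, P x' y z a b c) ∧
      (∀ a b x y z z', ∑ c, P x y z a b c = ∑ c, P x y z' a b c) ∧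
      (∀ a x y z y' z', ∑ b, ∑ c, P x y z a b c = ∑ b, ∑ c, P x y' z' a b c) ∧
      (∀ c z x y x' y', ∑ a, ∑ b, P x y z a b c = ∑ a, ∑ b, P x' y' z a b c) ∧
      -- (i) support: b = 0 and a ⊕ c = x·y·z
      (∀ x y z a b c, 0 < P x y z a b c → b = false ∧ xor a c = (x && (y && z))) ∧
      -- (ii) uniform single-party marginals for A and C
      (∀ x y z a, ∑ b, ∑ c, P x y z a b c = 1 / 2) ∧
      (∀ x y z c, ∑ a, ∑ b, P x y z a b c = 1 / 2) := by
  refine ⟨fun x y z a b c =>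
    if b = false ∧ xor a c = (x && (y && z)) then 1/2 else 0, ?_, ?_, ?_, ?_, ?_, ?_, ?_, ?_, ?_⟩
  · intro x y z a b c; dsimp only; split <;> norm_num
  · intro x y z; cases x <;> cases y <;> cases z <;> simp [Fintype.sum_bool] <;> norm_num
  · intro b c y z x x'
    cases b <;> cases c <;> cases y <;> cases z <;> cases x <;> cases x' <;>
      simp [Fintype.sum_bool] <;> norm_num
  · intro a b x y z z'
    cases a <;> cases b <;> cases x <;> cases y <;> cases z <;> cases z' <;>
      simp [Fintype.sum_bool] <;> norm_num
  · intro a x y z y' z'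
    cases a <;> cases x <;> cases y <;> cases z <;> cases y' <;> cases z' <;>
      simp [Fintype.sum_bool] <;> norm_num
  · intro c z x y x' y'
    cases c <;> cases z <;> cases x <;> cases y <;> cases x' <;> cases y' <;>
      simp [Fintype.sum_bool] <;> norm_num
  · intro x y z a b c h
    by_contra hc
    simp only [not_and_or] at hc
    dsimp only at h
    rcases hc with hc | hc <;>
      · rw [if_neg (by tauto)] at h; exact lt_irrefl 0 h
  · intro x y z a
    cases x <;> cases y <;> cases z <;> cases a <;> simp [Fintype.sum_bool] <;> norm_num
  · intro x y z c
    cases x <;> cases y <;> cases z <;> cases c <;> simp [Fintype.sum_bool] <;> norm_num
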